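/- Let 𝔉 be a cubical iterated graph system with parameters (d*,L*,s*), or the Sierpiński gasket IGS, or the pentagonal Sierpiński carpet IGS (in the latter two cases set L* = 2). Then for every type t ∈ 𝒯 and every m ∈ ℕ, d_{G_m}(I_{t,−}^{(m)}, I_{t,+}^{(m)}) ≥ (1/2)·L*^m. -/

import Mathlib

namespace IGSP

/-- An iterated graph system: a finite connected oriented graph `G₁ = (S, E)`, a set of
types `T` with a surjective typing map on edges, and nonempty gluing rules `I_t ⊆ S × S`. -/
structure System (S T : Type) where
  E : S → S → Prop
  not_both : ∀ x y : S, E x y → ¬ E y x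
  irrefl : ∀ x : S, ¬ E x x
  conn : ∀ x y : S, Relation.ReflTransGen (fun a b => E a b ∨ E b a) x y
  typ : S → S → T
  typ_surj : ∀ t : T, ∃ x y, E x y ∧ typ x y = t
  glue : T → S → S → Prop
  glue_nonempty : ∀ t : T, ∃ x y, glue t x y

variable {S T : Type}

/-- Words of length `m` over the symbol set `S`. -/
abbrev Word (S : Type) (m : ℕ) := Fin m → S

open Classical in
/-- The replacement graphs together with their typing functions, defined by recursion on
the length of words: `G₁ = (S,E)` and an oriented edge `(w,v) ∈ E_{m+1}` holds iff either
the length-`m` prefixes agree and the last symbols form an edge of `G₁`, or the prefixes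
form an edge of `E_m` and the last symbols belong to the gluing rule of its type. -/
noncomputable def replData [Nonempty T] (F : System S T) :
    (L : ℕ) → (Word S L → Word S L → Prop) × (Word S L → Word S L → T)
  | 0 => ⟨fun _ _ => False, fun _ _ => Classical.arbitrary T⟩
  | 1 => ⟨fun w v => F.E (w 0) (v 0), fun w v => F.typ (w 0) (v 0)⟩
  | L + 2 =>
      ⟨fun w v =>
        (Fin.init w = Fin.init v ∧ F.E (w (Fin.last (L + 1))) (v (Fin.last (L + 1)))) ∨
        ((replData F (L + 1)).1 (Fin.init w) (Fin.init v) ∧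
          F.glue ((replData F (L + 1)).2 (Fin.init w) (Fin.init v))
            (w (Fin.last (L + 1))) (v (Fin.last (L + 1)))),
       fun w v =>
        if Fin.init w = Fin.init v then F.typ (w (Fin.last (L + 1))) (v (Fin.last (L + 1)))
        else (replData F (L + 1)).2 (Fin.init w) (Fin.init v)⟩

/-- The oriented edge relation of the replacement graph on words of length `L`. -/
def edge [Nonempty T] (F : System S T) (L : ℕ) (w v : Word S L) : Prop :=
  (replData F L).1 w v

/-- The typing function of the replacement graph on words of length `L`. -/
noncomputable def etyp [Nonempty T] (F : System S T) (L : ℕ) (w v : Word S L) : T :=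
  (replData F L).2 w v

/-- The unoriented edge ("{w,v} ∈ E_L") relation. -/
def adjW [Nonempty T] (F : System S T) (L : ℕ) (w v : Word S L) : Prop :=
  edge F L w v ∨ edge F L v w

/-- The replacement graph `G_L` as a simple graph on words of length `L`. -/
noncomputable def replGraph [Nonempty T] (F : System S T) (L : ℕ) : SimpleGraph (Word S L) where
  Adj w v := w ≠ v ∧ adjW F L w v
  symm := by
    constructor
    intro w v h
    exact ⟨Ne.symm h.1, Or.symm h.2⟩
  loopless := by
    constructor
    intro w h
    exact h.1 rfl

/-- The degree of a word `w` in the replacement graph `G_L`: the number of `v` with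
`{w,v} ∈ E_L`. -/
noncomputable def degGm [Nonempty T] (F : System S T) (L : ℕ) (w : Word S L) : ℕ :=
  {v : Word S L | adjW F L w v}.ncard

/-- `I_{t,+}`, the set of symbols occurring as the first coordinate of the gluing rule. -/
def Iplus (F : System S T) (t : T) : Set S := {a | ∃ b, F.glue t a b}

/-- `I_{t,-}`, the set of symbols occurring as the second coordinate of the gluing rule. -/
def Iminus (F : System S T) (t : T) : Set S := {b | ∃ a, F.glue t a b}

/-- `I_{t,★}` where the orientation `★` is encoded by a boolean: `true = +`, `false = -`. -/
def Iset (F : System S T) (t : T) : Bool → Set S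
  | true => Iplus F t
  | false => Iminus F t

/-- `I_{t,★}^{(m)} = (I_{t,★})^m ⊆ W_m`. -/
def IsetW (F : System S T) (t : T) (b : Bool) (m : ℕ) : Set (Word S m) :=
  {w | ∀ i, w i ∈ Iset F t b}

/-- The boundary `∂G_m = ⋃_{(t,★)} I_{t,★}^{(m)}`. -/
def boundaryW (F : System S T) (m : ℕ) : Set (Word S m) :=
  ⋃ (t : T) (b : Bool), IsetW F t b m

/-- (GR1): every symbol has at most one gluing partner for each type and orientation. -/
def GR1 (F : System S T) : Prop :=
  ∀ (t : T) (s : S), {b | F.glue t s b}.Subsingleton ∧ {a | F.glue t a s}.Subsingleton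

/-- (GR2): for no type, orientation and symbol are the gluing-partner count and the
corresponding oriented degree in `G₁` simultaneously nonzero. -/
def GR2 (F : System S T) : Prop :=
  ∀ (t : T) (s : S),
    ¬ ((∃ b, F.glue t s b) ∧ ∃ b, F.E s b ∧ F.typ s b = t) ∧
    ¬ ((∃ a, F.glue t a s) ∧ ∃ a, F.E a s ∧ F.typ a s = t)

/-- (GR3): `I_{t,-} ∩ I_{t,+} = ∅` for every type `t`. -/
def GR3 (F : System S T) : Prop := ∀ t : T, Iminus F t ∩ Iplus F t = ∅

/-- Assumption (GR). -/
def GR (F : System S T) : Prop := GR1 F ∧ GR2 F ∧ GR3 F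

/-- A path in the replacement graph `G_L`: a nonempty list of words with consecutive
entries joined by an edge. -/
def IsPath [Nonempty T] (F : System S T) (L : ℕ) (θ : List (Word S L)) : Prop :=
  θ ≠ [] ∧ θ.Chain' (adjW F L)

open Classical in
/-- The projection `π_{L,k}` of a path: take length-`k` prefixes and remove consecutive
repetitions. -/
noncomputable def proj {k L : ℕ} (h : k ≤ L) (θ : List (Word S L)) : List (Word S k) :=
  (θ.map fun w => fun i => w (Fin.castLE h i)).destutter (· ≠ ·)

/-- An intersection path in `G_{m+1}`: a path admitting a compatible sequence of paths at
all levels with uniformly bounded lengths. -/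
def IsIntersectionPath [Nonempty T] (F : System S T) (m : ℕ) (θ : List (Word S (m + 1))) :
    Prop :=
  IsPath F (m + 1) θ ∧
  ∃ Θ : (n : ℕ) → List (Word S (n + 1)),
    Θ m = θ ∧ (∀ n, IsPath F (n + 1) (Θ n)) ∧
    (∀ (k n : ℕ) (h : k ≤ n), proj (Nat.succ_le_succ h) (Θ n) = Θ k) ∧
    ∃ C : ℕ, ∀ n, (Θ n).length ≤ C

/-- The fundamental neighbourhood `𝒩(w)`. -/
def nbhd [Nonempty T] (F : System S T) (m : ℕ) (w : Word S (m + 1)) :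
    Set (Word S (m + 1)) :=
  {v | ∃ θ, IsIntersectionPath F m θ ∧ θ.head? = some w ∧ θ.getLast? = some v}

/-- Bounded geometry: the diameters of fundamental neighbourhoods are uniformly bounded. -/
def BoundedGeometry [Nonempty T] (F : System S T) : Prop :=
  ∃ D : ℕ, ∀ (m : ℕ) (w : Word S (m + 1)), ∀ v₁ ∈ nbhd F m w, ∀ v₂ ∈ nbhd F m w,
    (replGraph F (m + 1)).dist v₁ v₂ ≤ D

/-- `|w ∧ v| < L` for words of length `L`: the words differ at some index below the last. -/
def ncRel {L : ℕ} (w v : Word S L) : Prop := ∃ j : Fin L, (j : ℕ) + 1 < L ∧ w j ≠ v j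

/-- A non-collapsing path: consecutive vertices satisfy `|w ∧ v| < L`. -/
def NonCollapsing {L : ℕ} (θ : List (Word S L)) : Prop := θ.Chain' ncRel

/-- A mapping between iterated graph systems. -/
structure Hom {S T S' T' : Type} (F : System S T) (F' : System S' T') where
  toFun : S → S'
  map_edge : ∀ x y, (F.E x y ∨ F.E y x) →
    (toFun x = toFun y ∨ F'.E (toFun x) (toFun y) ∨ F'.E (toFun y) (toFun x))
  glue_collapse : ∀ w1 v1, F.E w1 v1 → toFun w1 = toFun v1 →
    ∀ w2 v2, F.glue (F.typ w1 v1) w2 v2 → toFun w2 = toFun v2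
  glue_fwd : ∀ w1 v1, F.E w1 v1 → F'.E (toFun w1) (toFun v1) →
    ∀ w2 v2, F.glue (F.typ w1 v1) w2 v2 →
      F'.glue (F'.typ (toFun w1) (toFun v1)) (toFun w2) (toFun v2)
  glue_rev : ∀ w1 v1, F.E w1 v1 → F'.E (toFun v1) (toFun w1) →
    ∀ w2 v2, F.glue (F.typ w1 v1) w2 v2 →
      F'.glue (F'.typ (toFun v1) (toFun w1)) (toFun v2) (toFun w2)

/-- An isomorphism between iterated graph systems: a pair of mutually inverse mappings. -/
structure Iso {S T S' T' : Type} (F : System S T) (F' : System S' T') where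
  hom : Hom F F'
  inv : Hom F' F
  left_inv : ∀ x, inv.toFun (hom.toFun x) = x
  right_inv : ∀ y, hom.toFun (inv.toFun y) = y

/-- A flipping symmetry of type `t`. -/
def IsFlip (F : System S T) (t : T) (η : Iso F F) : Prop :=
  (∀ w ∈ Iplus F t, F.glue t w (η.hom.toFun w)) ∧
  (∀ v ∈ Iminus F t, F.glue t (η.hom.toFun v) v)

/-- The data of a reflection symmetry of an iterated graph system: an involutive
isomorphism together with the partition `S = C ∪ D ∪ Δ` satisfying (D1)-(D4). -/
structure ReflData (F : System S T) where
  iso : Iso F F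
  C : Set S
  D : Set S
  invol : ∀ x, iso.hom.toFun (iso.hom.toFun x) = x
  C_not_fixed : ∀ x ∈ C, iso.hom.toFun x ≠ x
  D_not_fixed : ∀ x ∈ D, iso.hom.toFun x ≠ x
  CD_disjoint : ∀ x, ¬ (x ∈ C ∧ x ∈ D)
  cover : ∀ x, x ∈ C ∨ x ∈ D ∨ iso.hom.toFun x = x
  image_C : iso.hom.toFun '' C = D
  edge_CD : ∀ x ∈ C, ∀ y ∈ D, (F.E x y ∨ F.E y x) → iso.hom.toFun x = y
  D2 : ∀ w1 v1, F.E w1 v1 → iso.hom.toFun v1 = v1 →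
    (w1 ∈ C → Iminus F (F.typ w1 v1) ⊆ C ∪ {x | iso.hom.toFun x = x}) ∧
    (w1 ∈ D → Iminus F (F.typ w1 v1) ⊆ D ∪ {x | iso.hom.toFun x = x})
  D3 : ∀ w1 v1, F.E w1 v1 → iso.hom.toFun w1 = w1 →
    (v1 ∈ C → Iplus F (F.typ w1 v1) ⊆ C ∪ {x | iso.hom.toFun x = x}) ∧
    (v1 ∈ D → Iplus F (F.typ w1 v1) ⊆ D ∪ {x | iso.hom.toFun x = x})
  D4 : ∀ w1 v1, F.E w1 v1 → iso.hom.toFun w1 = w1 → iso.hom.toFun v1 = v1 →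
    ∀ w2 v2, F.glue (F.typ w1 v1) w2 v2 →
      (w2 ∈ C ∧ v2 ∈ C) ∨ (w2 ∈ D ∧ v2 ∈ D) ∨
      (iso.hom.toFun w2 = w2 ∧ iso.hom.toFun v2 = v2)

/-- (D5): a reflection symmetry. -/
def IsRefl {F : System S T} (R : ReflData F) : Prop :=
  ∀ w1 v1, F.E w1 v1 → w1 ∈ R.C → v1 ∈ R.D →
    ∀ w2 v2, F.glue (F.typ w1 v1) w2 v2 → R.iso.hom.toFun w2 = v2

/-- (D5*): a separative reflection symmetry. -/
def IsSepRefl {F : System S T} (R : ReflData F) : Prop :=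
  ∀ x ∈ R.C, ∀ y ∈ R.D, ¬ (F.E x y ∨ F.E y x)

/-- The coordinatewise action of a reflection symmetry on words. -/
def wordMap {F : System S T} (R : ReflData F) {m : ℕ} (w : Word S m) : Word S m :=
  fun i => R.iso.hom.toFun (w i)

/-- The lifted set `C_α^{(m)}`: words whose first non-fixed coordinate lies in `C`. -/
def liftC {F : System S T} (R : ReflData F) (m : ℕ) : Set (Word S m) :=
  {w | ∃ k : Fin m, w k ∈ R.C ∧ ∀ j < k, R.iso.hom.toFun (w j) = w j}

/-- The lifted set `D_α^{(m)}`: words whose first non-fixed coordinate lies in `D`. -/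
def liftD {F : System S T} (R : ReflData F) (m : ℕ) : Set (Word S m) :=
  {w | ∃ k : Fin m, w k ∈ R.D ∧ ∀ j < k, R.iso.hom.toFun (w j) = w j}

end IGSP
namespace IGSP

variable {S T : Type}

/-- An antisymmetric function supported on the edges of a graph. -/
def Antisym {V : Type} (G : SimpleGraph V) (Φ : V → V → ℝ) : Prop :=
  (∀ x y, Φ x y = - Φ y x) ∧ ∀ x y, ¬ G.Adj x y → Φ x y = 0

/-- The divergence of `Φ` at a vertex. -/
noncomputable def fdiv {V : Type} (Φ : V → V → ℝ) (x : V) : ℝ := ∑ᶠ y, Φ x y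

/-- A flow from `A` to `B`. -/
def IsFlow {V : Type} (G : SimpleGraph V) (A B : Set V) (Φ : V → V → ℝ) : Prop :=
  Antisym G Φ ∧ ∀ x, x ∉ A ∪ B → fdiv Φ x = 0

/-- The total flow `I(Φ) = Σ_{x ∈ A} div Φ (x)`. -/
noncomputable def totalFlow {V : Type} (A : Set V) (Φ : V → V → ℝ) : ℝ :=
  ∑ᶠ x ∈ A, fdiv Φ x

/-- The `q`-energy `E_q(Φ) = Σ_{{x,y} ∈ E} |Φ(x,y)|^q` (each unordered edge counted once). -/
noncomputable def energy {V : Type} (q : ℝ) (Φ : V → V → ℝ) : ℝ :=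
  (∑ᶠ x, ∑ᶠ y, |Φ x y| ^ q) / 2

/-- The degree of a vertex of a graph. -/
noncomputable def degOf {V : Type} (G : SimpleGraph V) (x : V) : ℕ := {y | G.Adj x y}.ncard

/-- The maximal degree of a finite graph. -/
noncomputable def maxDeg {V : Type} [Fintype V] (G : SimpleGraph V) : ℕ :=
  Finset.univ.sup fun x => degOf G x

/-- The diameter of a finite graph (in the shortest-path metric). -/
noncomputable def gdiam {V : Type} [Fintype V] (G : SimpleGraph V) : ℕ :=
  Finset.univ.sup fun pr : V × V => G.dist pr.1 pr.2

/-- The set of vertices of a path. -/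
def pathVerts {V : Type} (θ : List V) : Set V := {x | x ∈ θ}

/-- A density is admissible for a path family if it is nonnegative and its sum along
every path of the family is at least 1. -/
def Admissible {V : Type} (Θ : Set (List V)) (ρ : V → ℝ) : Prop :=
  (∀ x, 0 ≤ ρ x) ∧ ∀ θ ∈ Θ, 1 ≤ ∑ᶠ x ∈ pathVerts θ, ρ x

/-- The discrete (vertex) `p`-modulus of a family of paths. -/
noncomputable def modulus {V : Type} (p : ℝ) (Θ : Set (List V)) : ℝ :=
  sInf {M | ∃ ρ : V → ℝ, Admissible Θ ρ ∧ M = ∑ᶠ x, ρ x ^ p}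

/-- The `p`-resistance `E_q(A,B,G)`: infimal `q`-energy of unit flows from `A` to `B`. -/
noncomputable def resistance {V : Type} (q : ℝ) (G : SimpleGraph V) (A B : Set V) : ℝ :=
  sInf {e | ∃ Φ, IsFlow G A B Φ ∧ totalFlow A Φ = 1 ∧ e = energy q Φ}

/-- The family `Θ_𝔞^{(m)}` of paths in `G_m` from `I_{t₁,★₁}^{(m)}` to `I_{t₂,★₂}^{(m)}`. -/
def ThetaIGS [Nonempty T] (F : System S T) (m : ℕ) (t₁ : T) (b₁ : Bool) (t₂ : T)
    (b₂ : Bool) : Set (List (Word S m)) :=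
  {θ | IsPath F m θ ∧ (∃ w ∈ IsetW F t₁ b₁ m, θ.head? = some w) ∧
    ∃ v ∈ IsetW F t₂ b₂ m, θ.getLast? = some v}

/-- `ℒ^{(m)}`, the collection of sets `I_{t,★}^{(m)}`. -/
def scriptL [Nonempty T] (F : System S T) (m : ℕ) : Set (Set (Word S m)) :=
  {A | ∃ (t : T) (b : Bool), A = IsetW F t b m}

/-- The added vertices `v_L` (for `L ∈ ℒ^{(m)}` and `v ∈ L`) of the graph `G̃_m`. -/
def AddedV [Nonempty T] (F : System S T) (m : ℕ) :=
  {pr : Set (Word S m) × Word S m // pr.1 ∈ scriptL F m ∧ pr.2 ∈ pr.1}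

/-- The vertex set of the graph `G̃_m`. -/
def TildeV [Nonempty T] (F : System S T) (m : ℕ) := Word S m ⊕ AddedV F m

/-- The graph `G̃_m`, obtained from `G_m` by attaching a pendant vertex `v_L` at every
`v ∈ L` for every `L ∈ ℒ^{(m)}`. -/
noncomputable def tildeG [Nonempty T] (F : System S T) (m : ℕ) : SimpleGraph (TildeV F m) where
  Adj x y :=
    match x, y with
    | Sum.inl w, Sum.inl v => w ≠ v ∧ adjW F m w v
    | Sum.inl w, Sum.inr pr => pr.1.2 = w
    | Sum.inr pr, Sum.inl w => pr.1.2 = w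
    | Sum.inr _, Sum.inr _ => False
  symm := by
    constructor
    rintro (w | pr) (v | qr) h
    · exact ⟨Ne.symm h.1, Or.symm h.2⟩
    · exact h
    · exact h
    · exact h.elim
  loopless := by
    constructor
    rintro (w | pr) h
    · exact h.1 rfl
    · exact h

/-- The set `L̃ = {v_L : v ∈ L}` of added vertices over `L`. -/
def tildeSet [Nonempty T] (F : System S T) (m : ℕ) (L : Set (Word S m)) :
    Set (TildeV F m) :=
  {x | ∃ pr : AddedV F m, pr.1.1 = L ∧ x = Sum.inr pr}

/-- A flow basis on `G̃_m`: a family of unit flows between the added vertex sets of all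
pairs of distinct members of `ℒ^{(m)}`, satisfying (FB1)–(FB4). -/
structure FlowBasis [Nonempty T] (F : System S T) (ηfam : T → Iso F F) (m : ℕ) where
  flow : (L₁ L₂ : Set (Word S m)) → L₁ ∈ scriptL F m → L₂ ∈ scriptL F m → L₁ ≠ L₂ →
    TildeV F m → TildeV F m → ℝ
  flow_isFlow : ∀ (L₁ L₂ : Set (Word S m)) (h₁ : L₁ ∈ scriptL F m) (h₂ : L₂ ∈ scriptL F m)
    (hne : L₁ ≠ L₂),
    IsFlow (tildeG F m) (tildeSet F m L₁) (tildeSet F m L₂) (flow L₁ L₂ h₁ h₂ hne)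
  flow_unit : ∀ (L₁ L₂ : Set (Word S m)) (h₁ : L₁ ∈ scriptL F m) (h₂ : L₂ ∈ scriptL F m)
    (hne : L₁ ≠ L₂), totalFlow (tildeSet F m L₁) (flow L₁ L₂ h₁ h₂ hne) = 1
  fb2 : ∀ (L₁ L₂ : Set (Word S m)) (h₁ : L₁ ∈ scriptL F m) (h₂ : L₂ ∈ scriptL F m)
    (hne : L₁ ≠ L₂) (pr : AddedV F m), pr.1.1 ≠ L₁ → pr.1.1 ≠ L₂ →
    flow L₁ L₂ h₁ h₂ hne (Sum.inr pr) (Sum.inl pr.1.2) = 0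
  fb3_out : ∀ (L L₁ L₂ : Set (Word S m)) (hL : L ∈ scriptL F m) (h₁ : L₁ ∈ scriptL F m)
    (h₂ : L₂ ∈ scriptL F m) (hne₁ : L ≠ L₁) (hne₂ : L ≠ L₂) (pr : AddedV F m),
    pr.1.1 = L →
    flow L L₁ hL h₁ hne₁ (Sum.inr pr) (Sum.inl pr.1.2) =
      flow L L₂ hL h₂ hne₂ (Sum.inr pr) (Sum.inl pr.1.2)
  fb3_in : ∀ (L L₁ L₂ : Set (Word S m)) (hL : L ∈ scriptL F m) (h₁ : L₁ ∈ scriptL F m)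
    (h₂ : L₂ ∈ scriptL F m) (hne₁ : L₁ ≠ L) (hne₂ : L₂ ≠ L) (pr : AddedV F m),
    pr.1.1 = L →
    flow L₁ L h₁ hL hne₁ (Sum.inl pr.1.2) (Sum.inr pr) =
      flow L₂ L h₂ hL hne₂ (Sum.inl pr.1.2) (Sum.inr pr)
  fb4_flip : ∀ (t : T) (b : Bool) (h₁ : IsetW F t b m ∈ scriptL F m)
    (h₂ : IsetW F t (!b) m ∈ scriptL F m) (hne : IsetW F t b m ≠ IsetW F t (!b) m)
    (pr qr : AddedV F m), pr.1.1 = IsetW F t b m → qr.1.1 = IsetW F t (!b) m →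
    qr.1.2 = (fun i => (ηfam t).hom.toFun (pr.1.2 i)) →
    flow (IsetW F t b m) (IsetW F t (!b) m) h₁ h₂ hne (Sum.inr pr) (Sum.inl pr.1.2) =
      flow (IsetW F t b m) (IsetW F t (!b) m) h₁ h₂ hne (Sum.inl qr.1.2) (Sum.inr qr)
  fb4_sym : ∀ (t : T) (b : Bool) (h₁ : IsetW F t b m ∈ scriptL F m)
    (h₂ : IsetW F t (!b) m ∈ scriptL F m) (hne : IsetW F t b m ≠ IsetW F t (!b) m)
    (hne' : IsetW F t (!b) m ≠ IsetW F t b m) (pr : AddedV F m),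
    pr.1.1 = IsetW F t b m →
    flow (IsetW F t b m) (IsetW F t (!b) m) h₁ h₂ hne (Sum.inr pr) (Sum.inl pr.1.2) =
      flow (IsetW F t (!b) m) (IsetW F t b m) h₂ h₁ hne' (Sum.inl pr.1.2) (Sum.inr pr)

/-- The `q`-energy of a flow basis: the maximal energy of its members. -/
noncomputable def basisEnergy [Nonempty T] {F : System S T} {ηfam : T → Iso F F} {m : ℕ}
    (q : ℝ) (FB : FlowBasis F ηfam m) : ℝ :=
  sSup {e | ∃ (L₁ L₂ : Set (Word S m)) (h₁ : L₁ ∈ scriptL F m) (h₂ : L₂ ∈ scriptL F m)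
    (hne : L₁ ≠ L₂), e = energy q (FB.flow L₁ L₂ h₁ h₂ hne)}

open Classical in
/-- The twisted flow `T_α(F)` of Proposition "Twist flow". -/
noncomputable def Talpha [Nonempty T] {F : System S T} {m : ℕ} (R : ReflData F)
    (L₁ L₂' : Set (Word S m)) (A : TildeV F m ≃ TildeV F m)
    (Φ : TildeV F m → TildeV F m → ℝ) : TildeV F m → TildeV F m → ℝ := fun x y =>
  if (∃ w, x = Sum.inl w ∧ wordMap R w = w) ∧ (∃ w, y = Sum.inl w ∧ wordMap R w = w) then
    Φ x y
  else if ((∃ w, x = Sum.inl w ∧ w ∈ liftC R m) ∨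
        (∃ pr : AddedV F m, x = Sum.inr pr ∧ (pr.1.1 = L₁ ∨ pr.1.1 = L₂'))) ∨
      ((∃ w, y = Sum.inl w ∧ w ∈ liftC R m) ∨
        (∃ pr : AddedV F m, y = Sum.inr pr ∧ (pr.1.1 = L₁ ∨ pr.1.1 = L₂'))) then
    Φ x y + Φ (A.symm x) (A.symm y)
  else 0

end IGSP
namespace IGSP

/-- The symbol set of the ambient cubical system: `{1,…,L}^d × {1,…,s}` (0-indexed). -/
abbrev CSym (d L s : ℕ) := (Fin d → Fin L) × Fin s

/-- The ambient edge relation of type `t_j`. -/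
def ambE {d L s : ℕ} (j : Fin d) (w v : CSym d L s) : Prop :=
  (∀ i, i ≠ j → w.1 i = v.1 i) ∧ (v.1 j : ℕ) = (w.1 j : ℕ) + 1

/-- The ambient gluing rule of type `t_j`. -/
def ambI {d L s : ℕ} (j : Fin d) (w v : CSym d L s) : Prop :=
  (∀ i, i ≠ j → w.1 i = v.1 i) ∧ (w.1 j : ℕ) = L - 1 ∧ (v.1 j : ℕ) = 0 ∧ w.2 = v.2

/-- A symbol lying on the `j`-axis edge of the cube: all other coordinates extremal
and label `1`. -/
def onAxis {d L s : ℕ} (j : Fin d) (w : CSym d L s) : Prop :=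
  (∀ i, i ≠ j → ((w.1 i : ℕ) = 0 ∨ (w.1 i : ℕ) = L - 1)) ∧ (w.2 : ℕ) = 0

/-- The coordinate reflection `η_j : c_j ↦ L + 1 - c_j`. -/
def etaMap {d L s : ℕ} (j : Fin d) (w : CSym d L s) : CSym d L s :=
  ⟨fun i => if i = j then ⟨L - 1 - (w.1 j : ℕ), by have := (w.1 j).isLt; omega⟩ else w.1 i,
    w.2⟩

/-- The diagonal reflection `α_{j,k}^+` exchanging coordinates `j` and `k`. -/
def swapMap {d L s : ℕ} (j k : Fin d) (w : CSym d L s) : CSym d L s :=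
  ⟨fun i => if i = j then w.1 k else if i = k then w.1 j else w.1 i, w.2⟩

/-- The anti-diagonal reflection `α_{j,k}^-`. -/
def aswapMap {d L s : ℕ} (j k : Fin d) (w : CSym d L s) : CSym d L s :=
  ⟨fun i =>
    if i = j then ⟨L - 1 - (w.1 k : ℕ), by have := (w.1 k).isLt; omega⟩
    else if i = k then ⟨L - 1 - (w.1 j : ℕ), by have := (w.1 j).isLt; omega⟩
    else w.1 i, w.2⟩

/-- A cubical iterated graph system: a sub-system of the ambient system `𝔉(d,L,s)`
satisfying the conditions (C1)–(C4). -/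
structure CubicalIGS (d L s : ℕ) where
  hd : 1 ≤ d
  hL : 3 ≤ L
  hs : 1 ≤ s
  Symb : Set (CSym d L s)
  sys : System (↥Symb) (Fin d)
  edge_amb : ∀ x y : ↥Symb, sys.E x y → ambE (sys.typ x y) x.1 y.1
  glue_amb : ∀ (j : Fin d) (x y : ↥Symb), sys.glue j x y → ambI j x.1 y.1
  C1 : ∀ w : CSym d L s, (∃ j, onAxis j w) → w ∈ Symb
  C2 : ∀ (j : Fin d) (x y : ↥Symb), onAxis j x.1 → onAxis j y.1 → ambE j x.1 y.1 →
    sys.E x y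
  C3 : ∀ (j : Fin d) (x y : ↥Symb), onAxis j x.1 → onAxis j y.1 → ambI j x.1 y.1 →
    sys.glue j x y
  C4_eta : ∀ j : Fin d, ∃ ψ : Iso sys sys,
    ∀ x : ↥Symb, (ψ.hom.toFun x : CSym d L s) = etaMap j x.1
  C4_plus : ∀ j k : Fin d, j ≠ k → ∃ ψ : Iso sys sys,
    ∀ x : ↥Symb, (ψ.hom.toFun x : CSym d L s) = swapMap j k x.1
  C4_minus : ∀ j k : Fin d, j ≠ k → ∃ ψ : Iso sys sys,
    ∀ x : ↥Symb, (ψ.hom.toFun x : CSym d L s) = aswapMap j k x.1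

/-- The corner symbol `𝐤`: first coordinate `k`, all other coordinates `1`, label `1`. -/
def cornerSym {d L s : ℕ} (cub : CubicalIGS d L s) (k : Fin L) : ↥cub.Symb :=
  ⟨⟨fun i => if (i : ℕ) = 0 then k else ⟨0, by have := k.isLt; omega⟩,
      ⟨0, by have := cub.hs; omega⟩⟩, by
    apply cub.C1
    refine ⟨⟨0, cub.hd⟩, fun i hi => ?_, rfl⟩
    have hiv : (i : ℕ) ≠ 0 := fun h => hi (Fin.ext h)
    left
    simp [hiv]⟩

end IGSP
namespace IGSP

/-- The edge relation of the Sierpiński gasket IGS. -/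
abbrev gasketE (x y : Fin 3) : Prop :=
  (x = 0 ∧ y = 1) ∨ (x = 1 ∧ y = 2) ∨ (x = 0 ∧ y = 2)

/-- The Sierpiński gasket iterated graph system. -/
noncomputable def gasket : System (Fin 3) (Fin 3) where
  E := gasketE
  not_both := by decide
  irrefl := by decide
  conn := by
    have hadj : ∀ a b : Fin 3, a ≠ b → gasketE a b ∨ gasketE b a := by decide
    intro x y
    rcases eq_or_ne x y with rfl | h
    · exact Relation.ReflTransGen.refl
    · exact Relation.ReflTransGen.single (hadj x y h)
  typ := fun x y => if x = 0 ∧ y = 1 then 0 else if x = 1 ∧ y = 2 then 1 else 2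
  typ_surj := by decide
  glue := fun t x y =>
    (t = 0 ∧ x = 1 ∧ y = 0) ∨ (t = 1 ∧ x = 2 ∧ y = 1) ∨ (t = 2 ∧ x = 2 ∧ y = 0)
  glue_nonempty := by decide

open Fin.NatCast in
/-- The pentagonal Sierpiński carpet iterated graph system. -/
noncomputable def pentagon : System (Fin 5) (Fin 5) where
  E := fun x y => y = x + 1
  not_both := by decide
  irrefl := by decide
  conn := by
    intro x y
    have key : ∀ (k : ℕ) (z : Fin 5),
        Relation.ReflTransGen (fun a b : Fin 5 => b = a + 1 ∨ a = b + 1) z (z + (k : Fin 5)) := by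
      intro k
      induction k with
      | zero => intro z; simpa using Relation.ReflTransGen.refl
      | succ n ih =>
          intro z
          have h : ((n + 1 : ℕ) : Fin 5) = ((n : ℕ) : Fin 5) + 1 := by push_cast; ring
          rw [h, ← add_assoc]
          exact (ih z).tail (Or.inl rfl)
    have h2 := key ((y - x : Fin 5) : ℕ) x
    rw [Fin.cast_val_eq_self] at h2
    have h3 : x + (y - x) = y := by abel
    rwa [h3] at h2
  typ := fun x _ => x
  typ_surj := fun t => ⟨t, t + 1, rfl, rfl⟩
  glue := fun t x y => (x = t + 1 ∧ y = t) ∨ (x = t + 2 ∧ y = t + 4)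
  glue_nonempty := fun t => ⟨t + 1, t, Or.inl ⟨rfl, rfl⟩⟩

/-- The interval iterated graph system `𝔉(1, L)`. -/
noncomputable def intervalSys (L : ℕ) (hL : 3 ≤ L) : System (Fin L) Unit where
  E x y := (y : ℕ) = (x : ℕ) + 1
  not_both := by intro x y h h'; omega
  irrefl := by intro x h; omega
  conn := by
    have key : ∀ (k : ℕ) (hk : k < L),
        Relation.ReflTransGen (fun a b : Fin L => ((b : ℕ) = (a : ℕ) + 1) ∨ ((a : ℕ) = (b : ℕ) + 1))
          ⟨0, by omega⟩ ⟨k, hk⟩ := by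
      intro k
      induction k with
      | zero => intro hk; exact Relation.ReflTransGen.refl
      | succ n ih =>
          intro hk
          exact Relation.ReflTransGen.tail (ih (by omega)) (Or.inl rfl)
    intro x y
    have hsymm : Symmetric fun a b : Fin L => ((b : ℕ) = (a : ℕ) + 1) ∨ ((a : ℕ) = (b : ℕ) + 1) :=
      fun a b h => h.symm
    have hx := key x.val x.isLt
    have hy := key y.val y.isLt
    simp only [Fin.eta] at hx hy
    haveI : Std.Symm fun a b : Fin L => ((b : ℕ) = (a : ℕ) + 1) ∨ ((a : ℕ) = (b : ℕ) + 1) :=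
      ⟨fun a b h => hsymm h⟩
    exact Relation.ReflTransGen.trans (Std.Symm.symm _ _ hx) hy
  typ := fun _ _ => ()
  typ_surj := by
    intro t
    refine ⟨⟨0, by omega⟩, ⟨1, by omega⟩, rfl, ?_⟩
    cases t; rfl
  glue := fun _ x y => (x : ℕ) = L - 1 ∧ (y : ℕ) = 0
  glue_nonempty := fun _ => ⟨⟨L - 1, by omega⟩, ⟨0, by omega⟩, rfl, rfl⟩

variable {S T : Type}

/-- A folding of `G_{k+n}` onto `w̃ · W_n`: a graph mapping into the induced subgraph on
`w̃ · W_n` which fixes `w̃ · W_n` pointwise. -/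
def HasFolding [Nonempty T] (F : System S T) (k n : ℕ) (wt : Word S k) : Prop :=
  ∃ f : Word S (k + n) → Word S (k + n),
    (∀ x, ∃ u : Word S n, f x = Fin.append wt u) ∧
    (∀ u : Word S n, f (Fin.append wt u) = Fin.append wt u) ∧
    (∀ x y, adjW F (k + n) x y → f x = f y ∨ adjW F (k + n) (f x) (f y))

end IGSP

/-!
Each system carries an integer potential on words, read off by a finite automaton as a base-`L*`
number: the letter at depth `i` of an `m`-letter word contributes a digit depending on the letter
and on the state reached so far. Along an edge of `G_m` the potential changes by a bounded amount,
because the change is controlled by an invariant of the type of the edge and the states of its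
endpoints which passes from an edge of `G_m` to the edges of `G_{m+1}` glued along it. The potential
vanishes on `I_{t,-}^{(m)}` and equals `B (L*^m - 1)` on `I_{t,+}^{(m)}`, where `B` bounds the change
along an edge, so every path between the two faces has at least `L*^m - 1` edges. For a cubical
system the potential is the `j`-th coordinate written in base `L*`, for the gasket it is twice the
projection onto the side of type `t`; the pentagon needs one bit of memory.
-/

namespace IGSP

variable {S T : Type}

section ReplacementGraph

variable [Nonempty T] {F : System S T}

theorem edge_succ_iff {m : ℕ} {w v : Word S (m + 1)} :
    edge F (m + 1) w v ↔
      (Fin.init w = Fin.init v ∧ F.E (w (Fin.last m)) (v (Fin.last m))) ∨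
      (edge F m (Fin.init w) (Fin.init v) ∧
        F.glue (etyp F m (Fin.init w) (Fin.init v)) (w (Fin.last m)) (v (Fin.last m))) := by
  cases m with
  | zero => simp [edge, replData, Subsingleton.elim (Fin.init w) (Fin.init v)]
  | succ m => rfl

theorem etyp_succ_of_init_eq {m : ℕ} {w v : Word S (m + 1)} (h : Fin.init w = Fin.init v) :
    etyp F (m + 1) w v = F.typ (w (Fin.last m)) (v (Fin.last m)) := by
  cases m with
  | zero => rfl
  | succ m => simp [etyp, replData, h]

theorem etyp_succ_of_init_ne {m : ℕ} {w v : Word S (m + 1)} (h : Fin.init w ≠ Fin.init v) :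
    etyp F (m + 1) w v = etyp F m (Fin.init w) (Fin.init v) := by
  cases m with
  | zero => exact absurd (Subsingleton.elim _ _) h
  | succ m => simp [etyp, replData, h]

theorem edge_irrefl : ∀ {m : ℕ} (w : Word S m), ¬ edge F m w w
  | 0, _ => id
  | _ + 1, w => by
    intro h
    rcases edge_succ_iff.mp h with ⟨-, h⟩ | ⟨h, -⟩
    · exact F.irrefl _ h
    · exact edge_irrefl _ h

theorem ne_of_edge {m : ℕ} {w v : Word S m} (h : edge F m w v) : w ≠ v := by
  rintro rfl
  exact edge_irrefl w h

theorem replGraph_adj_of_edge {m : ℕ} {w v : Word S m} (h : edge F m w v) :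
    (replGraph F m).Adj w v :=
  ⟨ne_of_edge h, Or.inl h⟩

theorem edge_snoc_snoc_of_E {m : ℕ} (p : Word S m) {a b : S} (h : F.E a b) :
    edge F (m + 1) (Fin.snoc p a) (Fin.snoc p b) :=
  edge_succ_iff.mpr (Or.inl (by simpa only [Fin.init_snoc, Fin.snoc_last, true_and]))

theorem edge_snoc_snoc_of_glue {m : ℕ} {p q : Word S m} (h : edge F m p q) {x y : S}
    (hg : F.glue (etyp F m p q) x y) : edge F (m + 1) (Fin.snoc p x) (Fin.snoc q y) :=
  edge_succ_iff.mpr (Or.inr (by simpa only [Fin.init_snoc, Fin.snoc_last] using ⟨h, hg⟩))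

theorem reachable_snoc_snoc {m : ℕ} (p : Word S m) (a b : S) :
    (replGraph F (m + 1)).Reachable (Fin.snoc p a) (Fin.snoc p b) := by
  induction F.conn a b with
  | refl => rfl
  | tail _ hcd ih =>
    refine ih.trans ?_
    rcases hcd with h | h
    · exact (replGraph_adj_of_edge (edge_snoc_snoc_of_E p h)).reachable
    · exact (replGraph_adj_of_edge (edge_snoc_snoc_of_E p h)).reachable.symm

theorem reachable_snoc_snoc_of_adj {m : ℕ} {p q : Word S m} (h : (replGraph F m).Adj p q)
    (a b : S) : (replGraph F (m + 1)).Reachable (Fin.snoc p a) (Fin.snoc q b) := by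
  wlog he : edge F m p q generalizing p q a b
  · exact (this h.symm b a (h.2.resolve_left he)).symm
  obtain ⟨x, y, hxy⟩ := F.glue_nonempty (etyp F m p q)
  exact (reachable_snoc_snoc p a x).trans <|
    (replGraph_adj_of_edge (edge_snoc_snoc_of_glue he hxy)).reachable.trans
      (reachable_snoc_snoc q y b)

theorem replGraph_preconnected : ∀ m : ℕ, (replGraph F m).Preconnected
  | 0 => fun w v => Subsingleton.elim w v ▸ .refl w
  | m + 1 => fun w v => by
    suffices ∀ {p q : Word S m}, (replGraph F m).Walk p q →
        ∀ a b, (replGraph F (m + 1)).Reachable (Fin.snoc p a) (Fin.snoc q b) by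
      obtain ⟨W⟩ := replGraph_preconnected m (Fin.init w) (Fin.init v)
      simpa only [Fin.snoc_init_self] using this W (w (Fin.last m)) (v (Fin.last m))
    intro p q W
    induction W with
    | nil => exact reachable_snoc_snoc _
    | cons h _ ih => exact fun a b => (reachable_snoc_snoc_of_adj h a a).trans (ih a b)

end ReplacementGraph

/-- `Rel t q q' d` is an invariant of the edges `(w, v)` of type `t` in every `G_m`, where `q`, `q'`
are the states reached on `w`, `v` and `d` is the difference of their potentials. -/
structure PotentialAutomaton (F : System S T) (l B : ℕ) where
  Q : Type
  init : Q
  next : Q → S → Q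
  out : Q → S → ℤ
  Rel : T → Q → Q → ℤ → Prop
  rel_of_E : ∀ q a b, F.E a b → Rel (F.typ a b) (next q a) (next q b) (out q b - out q a)
  rel_of_glue : ∀ t q q' d x y, Rel t q q' d → F.glue t x y →
    Rel t (next q x) (next q' y) (l * d + (out q' y - out q x))
  abs_le : ∀ t q q' d, Rel t q q' d → |d| ≤ B

namespace PotentialAutomaton

variable {F : System S T} {l B : ℕ}

def ofWeights (r : S → ℤ) (D : T → ℤ) (hE : ∀ a b, F.E a b → r b - r a = D (F.typ a b))
    (hglue : ∀ t x y, F.glue t x y → l * D t + (r y - r x) = D t) (hD : ∀ t, |D t| ≤ B) :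
    PotentialAutomaton F l B where
  Q := Unit
  init := ()
  next _ _ := ()
  out _ := r
  Rel t _ _ d := d = D t
  rel_of_E _ a b h := hE a b h
  rel_of_glue t _ _ d x y hd hg := by rw [hd, hglue t x y hg]
  abs_le t _ _ d hd := hd ▸ hD t

variable (A : PotentialAutomaton F l B)

def state : (m : ℕ) → Word S m → A.Q
  | 0, _ => A.init
  | m + 1, w => A.next (state m (Fin.init w)) (w (Fin.last m))

def potential : (m : ℕ) → Word S m → ℤ
  | 0, _ => 0
  | m + 1, w => l * potential m (Fin.init w) + A.out (A.state m (Fin.init w)) (w (Fin.last m))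

theorem rel_of_edge [Nonempty T] : ∀ {m : ℕ} {w v : Word S m}, edge F m w v →
    A.Rel (etyp F m w v) (A.state m w) (A.state m v) (A.potential m v - A.potential m w)
  | 0, _, _, h => absurd h id
  | m + 1, w, v, h => by
    rcases edge_succ_iff.mp h with ⟨hinit, hE⟩ | ⟨he, hg⟩
    · rw [etyp_succ_of_init_eq hinit, state, state, potential, potential, hinit]
      convert A.rel_of_E _ _ _ hE using 1
      ring
    · rw [etyp_succ_of_init_ne (ne_of_edge he), state, state, potential, potential]
      convert A.rel_of_glue _ _ _ _ _ _ (rel_of_edge he) hg using 1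
      ring

theorem abs_potential_sub_le_of_adj [Nonempty T] {m : ℕ} {w v : Word S m}
    (h : (replGraph F m).Adj w v) : |A.potential m v - A.potential m w| ≤ B := by
  rcases h.2 with he | he
  · exact A.abs_le _ _ _ _ (A.rel_of_edge he)
  · rw [abs_sub_comm]
    exact A.abs_le _ _ _ _ (A.rel_of_edge he)

theorem abs_potential_sub_le_mul_dist [Nonempty T] (m : ℕ) (w v : Word S m) :
    |A.potential m v - A.potential m w| ≤ B * (replGraph F m).dist w v := by
  obtain ⟨W, hW⟩ := (replGraph_preconnected (F := F) m w v).exists_walk_length_eq_dist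
  rw [← hW]
  clear hW
  induction W with
  | nil => simp
  | @cons x y z h W ih =>
    calc |A.potential m z - A.potential m x|
        ≤ |A.potential m z - A.potential m y| + |A.potential m y - A.potential m x| :=
          abs_sub_le _ _ _
      _ ≤ B * W.length + B := add_le_add ih (A.abs_potential_sub_le_of_adj h)
      _ = B * (SimpleGraph.Walk.cons h W).length := by
          rw [SimpleGraph.Walk.length_cons]; push_cast; ring

def EmitsConstOn (X : Set S) (c : ℤ) : Prop :=
  ∃ P : A.Q → Prop, P A.init ∧ ∀ q, P q → ∀ x ∈ X, P (A.next q x) ∧ A.out q x = c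

theorem potential_eq_of_emitsConstOn {X : Set S} {c : ℤ} (hX : A.EmitsConstOn X c) {m : ℕ}
    {w : Word S m} (hw : ∀ i, w i ∈ X) :
    A.potential m w = c * ∑ i ∈ Finset.range m, (l : ℤ) ^ i := by
  obtain ⟨P, hinit, hstep⟩ := hX
  suffices ∀ m (w : Word S m), (∀ i, w i ∈ X) →
      P (A.state m w) ∧ A.potential m w = c * ∑ i ∈ Finset.range m, (l : ℤ) ^ i from
    (this m w hw).2
  intro m
  induction m with
  | zero => exact fun _ _ => ⟨hinit, by simp [potential]⟩
  | succ m ih =>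
    intro w hw
    obtain ⟨hP, hpot⟩ := ih (Fin.init w) fun i => hw _
    obtain ⟨hP', hout⟩ := hstep _ hP _ (hw (Fin.last m))
    refine ⟨hP', ?_⟩
    simp only [potential, hpot, hout, Finset.sum_range_succ', pow_succ, ← Finset.sum_mul]
    ring

theorem emitsConstOn_ofWeights {r : S → ℤ} {D : T → ℤ}
    {hE : ∀ a b, F.E a b → r b - r a = D (F.typ a b)}
    {hglue : ∀ t x y, F.glue t x y → l * D t + (r y - r x) = D t} {hD : ∀ t, |D t| ≤ B}
    {X : Set S} {c : ℤ} (h : ∀ x ∈ X, r x = c) : (ofWeights r D hE hglue hD).EmitsConstOn X c :=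
  ⟨fun _ => True, trivial, fun _ _ x hx => ⟨trivial, h x hx⟩⟩

theorem pow_le_two_mul_dist [Nonempty T] {t : T} (hl : 2 ≤ l) (hB : 0 < B)
    (hminus : A.EmitsConstOn (Iminus F t) 0) (hplus : A.EmitsConstOn (Iplus F t) (B * (l - 1 : ℤ)))
    {m : ℕ} (hm : 1 ≤ m) {w v : Word S m} (hw : w ∈ IsetW F t false m)
    (hv : v ∈ IsetW F t true m) : l ^ m ≤ 2 * (replGraph F m).dist w v := by
  have hlm : (2 : ℤ) ≤ l ^ m := by exact_mod_cast hl.trans (Nat.le_self_pow (by omega) l)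
  have hbound := A.abs_potential_sub_le_mul_dist m w v
  rw [A.potential_eq_of_emitsConstOn hminus hw, A.potential_eq_of_emitsConstOn hplus hv,
    zero_mul, sub_zero, mul_assoc, mul_comm _ (∑ _ ∈ _, _), geom_sum_mul,
    abs_of_nonneg (mul_nonneg (by positivity) (by linarith))] at hbound
  have : (l : ℤ) ^ m - 1 ≤ (replGraph F m).dist w v :=
    le_of_mul_le_mul_left hbound (by exact_mod_cast hB)
  have : ((l ^ m : ℕ) : ℤ) ≤ 2 * (replGraph F m).dist w v := by
    push_cast
    linarith
  exact_mod_cast this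

end PotentialAutomaton

section Cubical

variable {d L s : ℕ} (cub : CubicalIGS d L s) (j : Fin d)

def cubicalAutomaton : PotentialAutomaton cub.sys L 1 :=
  .ofWeights (fun x => (x.1.1 j : ℤ)) (fun t => if t = j then 1 else 0)
    (fun a b h => by
      obtain ⟨hother, hsucc⟩ := cub.edge_amb a b h
      split_ifs with ht
      · subst ht
        omega
      · rw [hother j (Ne.symm ht), sub_self])
    (fun t x y h => by
      obtain ⟨hother, hx, hy, -⟩ := cub.glue_amb t x y h
      have := cub.hL
      split_ifs with ht
      · subst ht
        omega
      · rw [hother j (Ne.symm ht)]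
        ring)
    (fun t => by split_ifs <;> simp)

theorem cubical_pow_le_two_mul_dist [Nonempty (Fin d)] {m : ℕ} (hm : 1 ≤ m)
    {w v : Word cub.Symb m} (hw : w ∈ IsetW cub.sys j false m) (hv : v ∈ IsetW cub.sys j true m) :
    L ^ m ≤ 2 * (replGraph cub.sys m).dist w v := by
  refine (cubicalAutomaton cub j).pow_le_two_mul_dist (by have := cub.hL; omega) one_pos
    (PotentialAutomaton.emitsConstOn_ofWeights ?_) (PotentialAutomaton.emitsConstOn_ofWeights ?_)
    hm hw hv
  · rintro x ⟨a, h⟩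
    simp [(cub.glue_amb j a x h).2.2.1]
  · rintro x ⟨b, h⟩
    have := cub.hL
    simp [(cub.glue_amb j x b h).2.1]
    omega

end Cubical

section Gasket

/-- Twice the projection of the vertex `x` of the triangle onto the side of type `t`. -/
def gasketWeight (t x : Fin 3) : ℤ := ![![0, 2, 1], ![1, 0, 2], ![0, 1, 2]] t x

def gasketIncrement (t t' : Fin 3) : ℤ := ![![2, -1, 1], ![-1, 2, 1], ![1, 1, 2]] t t'

noncomputable def gasketAutomaton (t : Fin 3) : PotentialAutomaton gasket 2 2 :=
  .ofWeights (gasketWeight t) (gasketIncrement t)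
    (by dsimp only [gasket]; revert t; decide)
    (by dsimp only [gasket]; revert t; decide)
    (by revert t; decide)

theorem gasket_pow_le_two_mul_dist {t : Fin 3} {m : ℕ} (hm : 1 ≤ m) {w v : Word (Fin 3) m}
    (hw : w ∈ IsetW gasket t false m) (hv : v ∈ IsetW gasket t true m) :
    2 ^ m ≤ 2 * (replGraph gasket m).dist w v := by
  refine (gasketAutomaton t).pow_le_two_mul_dist le_rfl two_pos
    (PotentialAutomaton.emitsConstOn_ofWeights ?_) (PotentialAutomaton.emitsConstOn_ofWeights ?_)
    hm hw hv
  all_goals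
    clear hw hv
    simp only [Iminus, Iplus, Set.mem_ofPred_eq, gasket]
    revert t
    decide

end Gasket

section Pentagon

/- Letter weights alone give only constant potentials on the pentagon: its gluing rules force all
the increments `r (a + 1) - r a` to be equal, and they sum to zero. -/

/-- The increment along an edge of type `t + k` between states `q`, `q'` for the automaton of type
`t`; `none` marks the combinations that no edge realises. -/
def pentagonIncrement : Fin 5 → Bool → Bool → Option ℤ
  | _, false, false => some 0
  | 0, _, true => some 1
  | 1, true, false => some 0
  | 2, false, _ => some 0
  | 3, true, _ => some (-1)
  | 4, true, true => some 0
  | _, _, _ => none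

noncomputable def pentagonAutomaton (t : Fin 5) : PotentialAutomaton pentagon 2 1 where
  Q := Bool
  init := true
  next q x := q && x != t + 2
  out q x := if q ∧ (x = t ∨ x = t + 4) then 0 else 1
  Rel t' q q' d := d ∈ pentagonIncrement (t' - t) q q'
  rel_of_E := by dsimp only [pentagon]; revert t; decide
  rel_of_glue t' q q' d x y hd hg := by
    revert x y hg
    revert d
    dsimp only [pentagon]
    revert t t' q q'
    decide
  abs_le := by revert t; decide

theorem pentagon_pow_le_two_mul_dist {t : Fin 5} {m : ℕ} (hm : 1 ≤ m) {w v : Word (Fin 5) m}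
    (hw : w ∈ IsetW pentagon t false m) (hv : v ∈ IsetW pentagon t true m) :
    2 ^ m ≤ 2 * (replGraph pentagon m).dist w v := by
  refine (pentagonAutomaton t).pow_le_two_mul_dist le_rfl one_pos
    ⟨fun q => q = true, rfl, ?_⟩ ⟨fun _ => True, trivial, ?_⟩ hm hw hv
  all_goals
    clear hw hv
    simp only [Iminus, Iplus, Set.mem_ofPred_eq, pentagon, pentagonAutomaton]
    revert t
    decide

end Pentagon

/-- For a cubical iterated graph system (with scaling constant `L*`),
and for the Sierpiński gasket and pentagonal Sierpiński carpet systems (with `L* = 2`),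
the distance in `G_m` between the opposite faces `I_{t,-}^{(m)}` and `I_{t,+}^{(m)}` is
at least `(1/2) · L*^m` for every type `t` and every `m ≥ 1`. -/
theorem statement13 :
    (∀ (d L s : ℕ) (cub : CubicalIGS d L s),
      letI : Nonempty (Fin d) := ⟨⟨0, cub.hd⟩⟩
      ∀ (j : Fin d) (m : ℕ), 1 ≤ m →
        ∀ w ∈ IsetW cub.sys j false m, ∀ v ∈ IsetW cub.sys j true m,
          L ^ m ≤ 2 * (replGraph cub.sys m).dist w v) ∧
    (∀ (t : Fin 3) (m : ℕ), 1 ≤ m →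
      ∀ w ∈ IsetW gasket t false m, ∀ v ∈ IsetW gasket t true m,
        2 ^ m ≤ 2 * (replGraph gasket m).dist w v) ∧
    (∀ (t : Fin 5) (m : ℕ), 1 ≤ m →
      ∀ w ∈ IsetW pentagon t false m, ∀ v ∈ IsetW pentagon t true m,
        2 ^ m ≤ 2 * (replGraph pentagon m).dist w v) := by
  refine ⟨fun d L s cub => ?_, fun _ _ hm _ hw _ hv => gasket_pow_le_two_mul_dist hm hw hv,
    fun _ _ hm _ hw _ hv => pentagon_pow_le_two_mul_dist hm hw hv⟩
  have : Nonempty (Fin d) := ⟨⟨0, cub.hd⟩⟩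
  exact fun j _ hm _ hw _ hv => cubical_pow_le_two_mul_dist cub j hm hw hv

end IGSP
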